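/- arXiv:2012.02467 — 4 statements merged into one kernel-verified Lean document; each statement's English description precedes it below -/
import Mathlib

section
/- For intervals in ℤ, the space of natural transformations from the interval module 𝕀[a,b] to the interval module 𝕀[c,d] is nonzero if and only if c ≤ a ≤ d ≤ b; and when nonzero, it is one-dimensional over K. -/
/-! A natural transformation `f : 𝕀[a,b] ⟶ 𝕀[c,d]` is determined by its component at `a`,
since every nonzero vector of `𝕀[a,b]` is pushed forward from `a`; dually it is determined by its
component at `d`, since the structure maps of `𝕀[c,d]` from points of `[c,d]` into `d` are
injective. So if `f ≠ 0`, both components are nonzero, which forces `a ∈ [c,d]` and `d ∈ [a,b]`.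
Conversely, for `c ≤ a ≤ d ≤ b` the maps that are the identity on the overlap are natural, and
evaluation at `1 ∈ 𝕀[a,b](a)` identifies the space of natural transformations with `K`. -/

open CategoryTheory CategoryTheory.Limits Classical

attribute [local instance 2000] Preorder.smallCategory

noncomputable section

variable (K : Type) [Field K]

/-- Auxiliary submodule of `K`: all of `K` if `p` holds, `0` otherwise. -/
def gate (p : Prop) : Submodule K K := if p then ⊤ else ⊥

/-- Canonical map between submodules of `K`: the inclusion if possible, zero otherwise. -/
def gateMap (S T : Submodule K K) : S →ₗ[K] T :=
  if h : S ≤ T then Submodule.inclusion h else 0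

lemma gate_eq_zero {p : Prop} (hp : ¬ p) (v : gate K p) : v = 0 := by
  have hv := v.2
  simp only [gate, if_neg hp, Submodule.mem_bot] at hv
  exact Subtype.ext (by simpa using hv)

lemma gateMap_id (S : Submodule K K) : gateMap K S S = LinearMap.id := by
  ext v; simp [gateMap]

lemma gateMap_comp (p q r : Prop) (hpr : p → r → q) :
    (gateMap K (gate K q) (gate K r)).comp (gateMap K (gate K p) (gate K q)) =
      gateMap K (gate K p) (gate K r) := by
  by_cases hp : p
  · by_cases hr : r
    · have hq := hpr hp hr
      apply LinearMap.ext; intro v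
      have h1 : gate K p ≤ gate K q := by simp [gate, hp, hq]
      have h2 : gate K q ≤ gate K r := by simp [gate, hq, hr]
      have h3 : gate K p ≤ gate K r := by simp [gate, hp, hr]
      simp only [gateMap, dif_pos h1, dif_pos h2, dif_pos h3]
      rfl
    · apply LinearMap.ext; intro v
      rw [gate_eq_zero K hr ((gateMap K (gate K q) (gate K r) ∘ₗ gateMap K (gate K p) (gate K q)) v),
          gate_eq_zero K hr ((gateMap K (gate K p) (gate K r)) v)]
  · apply LinearMap.ext; intro v
    rw [gate_eq_zero K hp v]
    simp

/-- The interval persistence module `𝕀[a,b]` over a preorder `P`: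
it is `K` on `{x | a ≤ x ≤ b}` with identity internal maps, and `0` elsewhere. -/
def intervalMod {P : Type} [Preorder P] (a b : P) : P ⥤ ModuleCat.{0} K where
  obj x := ModuleCat.of K (gate K (a ≤ x ∧ x ≤ b))
  map {x y} f := ModuleCat.ofHom (gateMap K (gate K (a ≤ x ∧ x ≤ b)) (gate K (a ≤ y ∧ y ≤ b)))
  map_id x := congrArg ModuleCat.ofHom (gateMap_id K (gate K (a ≤ x ∧ x ≤ b)))
  map_comp {x y z} f g := congrArg ModuleCat.ofHom
    (gateMap_comp K (a ≤ x ∧ x ≤ b) (a ≤ y ∧ y ≤ b) (a ≤ z ∧ z ≤ b)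
      (fun hp hr => ⟨hp.1.trans (leOfHom f), (leOfHom g).trans hr.2⟩)).symm


lemma mem_gate {p : Prop} (hp : p) (k : K) : k ∈ gate K p := by
  simp [gate, hp]

def gateOne {p : Prop} (hp : p) : gate K p := ⟨1, mem_gate K hp 1⟩

lemma gate_linearMap_eq_zero {p : Prop} (hp : p) {M : Type*} [AddCommGroup M] [Module K M]
    (g : gate K p →ₗ[K] M) (h : g (gateOne K hp) = 0) : g = 0 := by
  ext v
  have hv : v = (v : K) • gateOne K hp := Subtype.ext (by simp [gateOne])
  rw [hv, map_smul, h, smul_zero, LinearMap.zero_apply]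

lemma gateMap_gate_coe {p q : Prop} (hq : q) (v : gate K p) :
    (gateMap K (gate K p) (gate K q) v : K) = v := by
  have hle : gate K p ≤ gate K q := by
    rw [show gate K q = ⊤ from if_pos hq]
    exact le_top
  rw [gateMap, dif_pos hle]
  rfl

section Vanishing

variable {K} {P : Type} [Preorder P] {a b c d : P}

lemma intervalMod_naturality (f : intervalMod K a b ⟶ intervalMod K c d) {x y : P} (hxy : x ≤ y)
    (v : gate K (a ≤ x ∧ x ≤ b)) :
    f.app y (gateMap K (gate K (a ≤ x ∧ x ≤ b)) (gate K (a ≤ y ∧ y ≤ b)) v) =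
      gateMap K (gate K (c ≤ x ∧ x ≤ d)) (gate K (c ≤ y ∧ y ≤ d)) (f.app x v) :=
  ConcreteCategory.congr_hom (f.naturality (homOfLE hxy)) v

lemma intervalMod_app_eq_zero (f : intervalMod K a b ⟶ intervalMod K c d) {x : P}
    (hx : ¬ ((a ≤ x ∧ x ≤ b) ∧ (c ≤ x ∧ x ≤ d))) : f.app x = 0 := by
  ext v
  by_cases hdom : a ≤ x ∧ x ≤ b
  · exact gate_eq_zero K (fun hcod => hx ⟨hdom, hcod⟩) _
  · rw [gate_eq_zero K hdom v]
    exact map_zero _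

lemma intervalMod_hom_eq_zero (f : intervalMod K a b ⟶ intervalMod K c d)
    (h : ∀ x (v : gate K (a ≤ x ∧ x ≤ b)), f.app x v = 0) : f = 0 := by
  ext x v
  exact h x v

lemma intervalMod_hom_eq_zero_of_app_left (f : intervalMod K a b ⟶ intervalMod K c d)
    (h : f.app a = 0) : f = 0 := by
  refine intervalMod_hom_eq_zero f fun x v => ?_
  by_cases hx : a ≤ x ∧ x ≤ b
  · let w : gate K (a ≤ a ∧ a ≤ b) := ⟨v, mem_gate K ⟨le_rfl, hx.1.trans hx.2⟩ _⟩
    have hw : gateMap K _ (gate K (a ≤ x ∧ x ≤ b)) w = v := Subtype.ext (gateMap_gate_coe K hx w)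
    rw [← hw, intervalMod_naturality f hx.1, h]
    exact map_zero _
  · rw [gate_eq_zero K hx v]
    exact map_zero _

lemma intervalMod_hom_eq_zero_of_app_right (f : intervalMod K a b ⟶ intervalMod K c d)
    (h : f.app d = 0) : f = 0 := by
  refine intervalMod_hom_eq_zero f fun x v => ?_
  by_cases hx : c ≤ x ∧ x ≤ d
  · have hnat := intervalMod_naturality f hx.2 v
    rw [h] at hnat
    have hd : c ≤ d ∧ d ≤ d := ⟨hx.1.trans hx.2, le_rfl⟩
    exact Subtype.ext ((gateMap_gate_coe K hd _).symm.trans (congrArg Subtype.val hnat.symm))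
  · exact gate_eq_zero K hx _

lemma le_of_intervalMod_hom_ne_zero {f : intervalMod K a b ⟶ intervalMod K c d} (hf : f ≠ 0) :
    c ≤ a ∧ a ≤ d ∧ d ≤ b := by
  have mem_of_app_ne_zero {x : P} (hx : f.app x ≠ 0) : (a ≤ x ∧ x ≤ b) ∧ (c ≤ x ∧ x ≤ d) :=
    not_not.mp fun h => hx (intervalMod_app_eq_zero f h)
  have ha := mem_of_app_ne_zero fun h => hf (intervalMod_hom_eq_zero_of_app_left f h)
  have hd := mem_of_app_ne_zero fun h => hf (intervalMod_hom_eq_zero_of_app_right f h)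
  exact ⟨ha.2.1, ha.2.2, hd.1.2⟩

end Vanishing

section Generator

variable {P : Type} [Preorder P] {a b c d : P}

def intervalHom (hca : c ≤ a) (hdb : d ≤ b) : intervalMod K a b ⟶ intervalMod K c d where
  app x := ModuleCat.ofHom (gateMap K (gate K (a ≤ x ∧ x ≤ b)) (gate K (c ≤ x ∧ x ≤ d)))
  naturality _ _ g := congrArg ModuleCat.ofHom <|
    (gateMap_comp K _ _ _ fun hx hy => ⟨hx.1.trans (leOfHom g), hy.2.trans hdb⟩).trans
      (gateMap_comp K _ _ _ fun hx hy => ⟨hca.trans hx.1, (leOfHom g).trans hy.2⟩).symm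

def evalLeftEndpoint (hab : a ≤ b) : (intervalMod K a b ⟶ intervalMod K c d) →ₗ[K] K where
  toFun f := (f.app a (gateOne K ⟨le_rfl, hab⟩)).1
  map_add' _ _ := rfl
  map_smul' _ _ := rfl

lemma evalLeftEndpoint_intervalHom (hab : a ≤ b) (hca : c ≤ a) (had : a ≤ d) (hdb : d ≤ b) :
    evalLeftEndpoint K hab (intervalHom K hca hdb) = 1 :=
  gateMap_gate_coe K (p := a ≤ a ∧ a ≤ b) ⟨hca, had⟩ _

lemma evalLeftEndpoint_injective (hab : a ≤ b) :
    Function.Injective (evalLeftEndpoint K (c := c) (d := d) hab) :=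
  (injective_iff_map_eq_zero _).mpr fun f hf => intervalMod_hom_eq_zero_of_app_left f <|
    ModuleCat.hom_ext (gate_linearMap_eq_zero K ⟨le_rfl, hab⟩ (f.app a).hom (Subtype.ext hf))

def intervalHomEquiv (hca : c ≤ a) (had : a ≤ d) (hdb : d ≤ b) :
    (intervalMod K a b ⟶ intervalMod K c d) ≃ₗ[K] K :=
  .ofBijective (evalLeftEndpoint K (had.trans hdb))
    ⟨evalLeftEndpoint_injective K _, fun s => ⟨s • intervalHom K hca hdb, by
      rw [map_smul, evalLeftEndpoint_intervalHom K _ hca had hdb, smul_eq_mul, mul_one]⟩⟩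

lemma exists_intervalMod_hom_ne_zero_iff :
    (∃ f : intervalMod K a b ⟶ intervalMod K c d, f ≠ 0) ↔ c ≤ a ∧ a ≤ d ∧ d ≤ b := by
  refine ⟨fun ⟨_, hf⟩ => le_of_intervalMod_hom_ne_zero hf, fun ⟨hca, had, hdb⟩ => ?_⟩
  refine ⟨intervalHom K hca hdb, fun h => one_ne_zero (α := K) ?_⟩
  rw [← evalLeftEndpoint_intervalHom K (had.trans hdb) hca had hdb, h, map_zero]

lemma finrank_intervalMod_hom (hca : c ≤ a) (had : a ≤ d) (hdb : d ≤ b) :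
    Module.finrank K (intervalMod K a b ⟶ intervalMod K c d) = 1 := by
  rw [(intervalHomEquiv K hca had hdb).finrank_eq, Module.finrank_self]

end Generator

theorem interval_hom_iff (a b c d : ℤ) :
    ((∃ f : intervalMod K a b ⟶ intervalMod K c d, f ≠ 0) ↔ (c ≤ a ∧ a ≤ d ∧ d ≤ b)) ∧
    ((c ≤ a ∧ a ≤ d ∧ d ≤ b) →
      Module.finrank K (intervalMod K a b ⟶ intervalMod K c d) = 1) :=
  ⟨exists_intervalMod_hom_ne_zero_iff K,
    fun ⟨hca, had, hdb⟩ => finrank_intervalMod_hom K hca had hdb⟩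

end
end

section
/- Let M be a persistence module over the grid {1,…,m} × {1,2} (a commutative ladder). If there exist vertices x ≤ y ≤ z with M(x) ≠ 0, M(y) = 0, and M(z) ≠ 0, then M is decomposable, i.e., M is isomorphic to a direct sum of two nonzero persistence modules. -/
open CategoryTheory CategoryTheory.Limits

attribute [local instance 2000] Preorder.smallCategory

attribute [local instance] HasFiniteBiproducts.of_hasFiniteProducts

/-!
A family of submodules of the spaces `M v` that is preserved by all structure maps is a
subfunctor, and two such families that are complementary at every vertex split `M` as their
biproduct. So it suffices to cut the ladder at the zero vertex `y` into two complementary invariant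
families, the first being everything at `x` and the second everything at `z`.

If `y = (c + 1, 0)`, every map from `(c, 0)` to a column `> c` factors through `y` and vanishes.
Let `A` be the bottom row up to column `c` together with the vectors of the top row in columns
`≤ c` whose image in column `c` comes from the bottom row. On the top row `A` is closed under
preimages, so complements of it can be chosen from left to right, each containing the image of the
previous one.

If `y = (j, 1)`, every map out of `y` vanishes. Let `A` be everything in columns `≤ j` together with
the image of `M (j, 0)` in the bottom row further right. On the bottom row `A` is carried onto
itself surjectively, so complements can be chosen from right to left, each contained in the
preimage of the next one.
-/

universe u v

namespace Submodule

variable {R V W : Type*} [Ring R] [AddCommGroup V] [Module R V] [AddCommGroup W] [Module R W]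

theorem projection_comm_of_le_comap {p q : Submodule R V} {p' q' : Submodule R W}
    (h : IsCompl p q) (h' : IsCompl p' q') (f : V →ₗ[R] W)
    (hp : p ≤ p'.comap f) (hq : q ≤ q'.comap f) (u : V) :
    p'.projection q' h' (f u) = f (p.projection q h u) := by
  have hsplit : f u = f (p.projection q h u) + f (u - p.projection q h u) := by
    rw [← map_add, add_sub_cancel]
  rw [hsplit, map_add, projection_apply_of_mem_left h' (hp (projection_apply_mem h u)),
    (projection_apply_eq_zero_iff h').2 (hq (sub_projection_mem h u)), add_zero]

end Submodule

namespace CategoryTheory.Functor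

variable {P C : Type*} [Preorder P] [Category C] (F : P ⥤ C)

theorem map_eq_map_comp_map {x y z : P} (hxy : x ≤ y) (hyz : y ≤ z) (f : x ⟶ z) :
    F.map f = F.map (homOfLE hxy) ≫ F.map (homOfLE hyz) := by
  rw [← F.map_comp]
  rfl

variable [HasZeroMorphisms C]

theorem map_eq_zero_of_isZero {x y z : P} (hy : IsZero (F.obj y)) (hxy : x ≤ y) (hyz : y ≤ z)
    (f : x ⟶ z) : F.map f = 0 := by
  rw [F.map_eq_map_comp_map hxy hyz, hy.eq_of_src (F.map (homOfLE hyz)) 0, comp_zero]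

theorem map_eq_zero_of_le_of_lt {c : P} (hc : ∀ ⦃i : P⦄ (f : c ⟶ i), c < i → F.map f = 0)
    ⦃i i' : P⦄ (f : i ⟶ i') (hi : i ≤ c) (hi' : c < i') : F.map f = 0 := by
  rw [F.map_eq_map_comp_map hi hi'.le, hc _ hi', comp_zero]

end CategoryTheory.Functor

section SubmoduleFamilies

variable {R : Type u} [Ring R] {J : Type*} [Category J]

def IsInvariantFamily (M : J ⥤ ModuleCat.{v} R) (A : ∀ j, Submodule R (M.obj j)) : Prop :=
  ∀ ⦃i j : J⦄ (f : i ⟶ j), A i ≤ (A j).comap (M.map f).hom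

noncomputable def IsInvariantFamily.functor {M : J ⥤ ModuleCat.{v} R}
    {A : ∀ j, Submodule R (M.obj j)} (hA : IsInvariantFamily M A) : J ⥤ ModuleCat.{v} R where
  obj j := ModuleCat.of R (A j)
  map f := ModuleCat.ofHom ((M.map f).hom.restrict (hA f))
  map_id j := by ext u; exact congr($(M.map_id j) u.1)
  map_comp f g := by ext u; exact congr($(M.map_comp f g) u.1)

def Decomposable (M : J ⥤ ModuleCat.{v} R) : Prop :=
  ∃ M₁ M₂ : J ⥤ ModuleCat.{v} R, ¬ IsZero M₁ ∧ ¬ IsZero M₂ ∧ Nonempty (M ≅ M₁ ⊞ M₂)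

end SubmoduleFamilies

namespace IsInvariantFamily

variable {R : Type u} [Ring R] {J : Type*} [Category J] {M : J ⥤ ModuleCat.{v} R}
  {A B : ∀ j, Submodule R (M.obj j)}

noncomputable def bicone (hA : IsInvariantFamily M A) (hB : IsInvariantFamily M B)
    (hAB : ∀ j, IsCompl (A j) (B j)) : BinaryBicone hA.functor hB.functor where
  pt := M
  fst :=
    { app j := ModuleCat.ofHom ((A j).projectionOnto (B j) (hAB j))
      naturality i j f := by
        ext u
        exact Subtype.ext
          (Submodule.projection_comm_of_le_comap (hAB i) (hAB j) _ (hA f) (hB f) u) }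
  snd :=
    { app j := ModuleCat.ofHom ((B j).projectionOnto (A j) (hAB j).symm)
      naturality i j f := by
        ext u
        exact Subtype.ext
          (Submodule.projection_comm_of_le_comap (hAB i).symm (hAB j).symm _ (hB f) (hA f) u) }
  inl := { app j := ModuleCat.ofHom (A j).subtype }
  inr := { app j := ModuleCat.ofHom (B j).subtype }
  inl_fst := by ext j u; exact Submodule.projectionOnto_apply_left (hAB j) u
  inl_snd := by ext j u; exact Submodule.projectionOnto_apply_right (hAB j).symm u
  inr_fst := by ext j u; exact Submodule.projectionOnto_apply_right (hAB j) u
  inr_snd := by ext j u; exact Submodule.projectionOnto_apply_left (hAB j).symm u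

noncomputable def isoBiprod (hA : IsInvariantFamily M A) (hB : IsInvariantFamily M B)
    (hAB : ∀ j, IsCompl (A j) (B j)) : M ≅ hA.functor ⊞ hB.functor :=
  biprod.uniqueUpToIso _ _ <| isBinaryBilimitOfTotal (bicone hA hB hAB) <| by
    ext j u
    exact Submodule.projection_add_projection_eq_self (hAB j) u

theorem not_isZero_functor (hA : IsInvariantFamily M A) {j : J} (hj : A j = ⊤)
    (hM : ¬ IsZero (M.obj j)) : ¬ IsZero hA.functor := fun h =>
  hM <| ((Functor.isZero_iff _).1 h j).of_iso (LinearEquiv.ofTop (A j) hj).toModuleIso.symm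

theorem decomposable (hA : IsInvariantFamily M A) (hB : IsInvariantFamily M B)
    (hAB : ∀ j, IsCompl (A j) (B j)) {x z : J} (hAx : A x = ⊤) (hBz : B z = ⊤)
    (hx : ¬ IsZero (M.obj x)) (hz : ¬ IsZero (M.obj z)) : Decomposable M :=
  ⟨hA.functor, hB.functor, hA.not_isZero_functor hAx hx, hB.not_isZero_functor hBz hz,
    ⟨isoBiprod hA hB hAB⟩⟩

end IsInvariantFamily

theorem comap_map_eq_comap_comap {R : Type u} [Ring R] {P : Type*} [Preorder P]
    (F : P ⥤ ModuleCat.{v} R) {i j l : P} (f : i ⟶ l) (g : i ⟶ j) (h : j ⟶ l)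
    (U : Submodule R (F.obj l)) :
    U.comap (F.map f).hom = (U.comap (F.map h).hom).comap (F.map g).hom := by
  rw [F.map_eq_map_comp_map (leOfHom g) (leOfHom h)]
  rfl

section Chains

variable {K : Type u} [DivisionRing K] {n : ℕ} (F : Fin n ⥤ ModuleCat.{v} K)

theorem exists_isCompl_extend_of_comap_le (W C : ∀ i, Submodule K (F.obj i)) (p : Fin n)
    (hW : ∀ ⦃i : Fin n⦄ (f : i ⟶ p), (W p).comap (F.map f).hom ≤ W i)
    (hC : ∀ i : Fin n, i < p → IsCompl (W i) (C i))
    (hCinv : ∀ ⦃i i' : Fin n⦄ (f : i ⟶ i'), i' < p → C i ≤ (C i').comap (F.map f).hom) :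
    ∃ D, IsCompl (W p) D ∧ ∀ ⦃i : Fin n⦄ (f : i ⟶ p), i < p → C i ≤ D.comap (F.map f).hom := by
  rcases p with ⟨_ | k, hk⟩
  · obtain ⟨D, hD⟩ := Submodule.exists_isCompl (W ⟨0, hk⟩)
    exact ⟨D, hD, fun _ _ hi => (Nat.not_lt_zero _ hi).elim⟩
  · let q : Fin n := ⟨k, by omega⟩
    have hqp : q ≤ ⟨k + 1, hk⟩ := Fin.mk_le_mk.2 k.le_succ
    have hdisj : Disjoint ((C q).map (F.map (homOfLE hqp)).hom) (W ⟨k + 1, hk⟩) := by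
      rw [Submodule.disjoint_def]
      rintro _ ⟨u, hu, rfl⟩ huW
      rw [(Submodule.disjoint_def.1 (hC q (Fin.mk_lt_mk.2 k.lt_succ_self)).symm.disjoint u hu
        (hW (homOfLE hqp) huW)), map_zero]
    obtain ⟨D, hCD, hD⟩ := hdisj.exists_isCompl
    refine ⟨D, hD.symm, fun i f hi => ?_⟩
    have hiq : i ≤ q := Fin.mk_le_mk.2 (Nat.lt_succ_iff.1 hi)
    calc C i ≤ (C q).comap (F.map (homOfLE hiq)).hom :=
          hCinv (homOfLE hiq) (Fin.mk_lt_mk.2 k.lt_succ_self)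
      _ ≤ (D.comap (F.map (homOfLE hqp)).hom).comap (F.map (homOfLE hiq)).hom :=
        Submodule.comap_mono (Submodule.map_le_iff_le_comap.1 hCD)
      _ = D.comap (F.map f).hom := (comap_map_eq_comap_comap F f _ _ D).symm

theorem exists_isCompl_isInvariant_of_comap_le (W : ∀ i, Submodule K (F.obj i)) (k : ℕ)
    (hW : ∀ ⦃i i' : Fin n⦄ (f : i ⟶ i'), i'.val < k → (W i').comap (F.map f).hom ≤ W i) :
    ∃ C : ∀ i, Submodule K (F.obj i), (∀ i : Fin n, i.val < k → IsCompl (W i) (C i)) ∧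
      ∀ ⦃i i' : Fin n⦄ (f : i ⟶ i'), i'.val < k → C i ≤ (C i').comap (F.map f).hom := by
  induction k with
  | zero => exact ⟨fun _ => ⊥, fun _ h => (Nat.not_lt_zero _ h).elim,
      fun _ _ _ h => (Nat.not_lt_zero _ h).elim⟩
  | succ k ih =>
    obtain ⟨C, hC, hCinv⟩ := ih fun i i' f hi' => hW f (by omega)
    by_cases hk : k < n
    swap
    · exact ⟨C, fun i hi => hC i (by omega), fun i i' f hi' => hCinv f (by omega)⟩
    let p : Fin n := ⟨k, hk⟩
    obtain ⟨D, hD, hCD⟩ := exists_isCompl_extend_of_comap_le F W C p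
      (fun i f => hW f k.lt_succ_self) hC hCinv
    refine ⟨Function.update C p D, fun i hi => ?_, fun i i' f hi' => ?_⟩
    · rcases Nat.lt_succ_iff_lt_or_eq.1 hi with hi | hi
      · rw [Function.update_of_ne (Fin.ne_of_lt hi)]
        exact hC i hi
      · obtain rfl : i = p := Fin.ext hi
        rw [Function.update_self]
        exact hD
    · have hii' : i ≤ i' := leOfHom f
      rcases Nat.lt_succ_iff_lt_or_eq.1 hi' with hi' | hi'
      · rw [Function.update_of_ne (Fin.ne_of_lt (lt_of_le_of_lt hii' hi')),
          Function.update_of_ne (Fin.ne_of_lt hi')]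
        exact hCinv f hi'
      · obtain rfl : i' = p := Fin.ext hi'
        rw [Function.update_self]
        rcases hii'.lt_or_eq with hi | rfl
        · rw [Function.update_of_ne (Fin.ne_of_lt hi)]
          exact hCD f hi
        · rw [Function.update_self, Subsingleton.elim f (𝟙 _), F.map_id]
          exact le_rfl

theorem exists_isCompl_extend_of_le_map (W C : ∀ i, Submodule K (F.obj i)) (p : Fin n)
    (hW : ∀ ⦃i' : Fin n⦄ (f : p ⟶ i'), W i' ≤ (W p).map (F.map f).hom)
    (hC : ∀ i' : Fin n, p < i' → IsCompl (W i') (C i'))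
    (hCinv : ∀ ⦃i i' : Fin n⦄ (f : i ⟶ i'), p < i → C i ≤ (C i').comap (F.map f).hom) :
    ∃ D, IsCompl (W p) D ∧
      ∀ ⦃i' : Fin n⦄ (f : p ⟶ i'), p < i' → D ≤ (C i').comap (F.map f).hom := by
  by_cases hp : p.val + 1 < n
  swap
  · obtain ⟨D, hD⟩ := Submodule.exists_isCompl (W p)
    exact ⟨D, hD, fun i' _ hi' => absurd (Fin.lt_def.1 hi') (by omega)⟩
  let q : Fin n := ⟨p.val + 1, hp⟩
  have hpq : p < q := Fin.lt_def.2 p.val.lt_succ_self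
  have hcodisj : Codisjoint ((C q).comap (F.map (homOfLE hpq.le)).hom) (W p) := by
    rw [codisjoint_iff, eq_top_iff]
    intro u _
    obtain ⟨w, hw, c, hc, hwc⟩ := Submodule.mem_sup.1
      ((hC q hpq).codisjoint.eq_top.ge (Submodule.mem_top (x := F.map (homOfLE hpq.le) u)))
    obtain ⟨w', hw', rfl⟩ := hW (homOfLE hpq.le) hw
    refine Submodule.mem_sup.2 ⟨u - w', ?_, w', hw', sub_add_cancel u w'⟩
    rw [Submodule.mem_comap, map_sub, ← hwc, add_sub_cancel_left]
    exact hc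
  obtain ⟨D, hDC, hD⟩ := hcodisj.exists_isCompl
  refine ⟨D, hD.symm, fun i' f hi' => ?_⟩
  have hqi' : q ≤ i' := Fin.le_def.2 (Fin.lt_def.1 hi')
  calc D ≤ (C q).comap (F.map (homOfLE hpq.le)).hom := hDC
    _ ≤ ((C i').comap (F.map (homOfLE hqi')).hom).comap (F.map (homOfLE hpq.le)).hom :=
      Submodule.comap_mono (hCinv (homOfLE hqi') hpq)
    _ = (C i').comap (F.map f).hom := (comap_map_eq_comap_comap F f _ _ _).symm

theorem exists_isCompl_isInvariant_of_le_map (W : ∀ i, Submodule K (F.obj i)) (k : ℕ)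
    (hW : ∀ ⦃i i' : Fin n⦄ (f : i ⟶ i'), k ≤ i.val → W i' ≤ (W i).map (F.map f).hom) :
    ∃ C : ∀ i, Submodule K (F.obj i), (∀ i : Fin n, k ≤ i.val → IsCompl (W i) (C i)) ∧
      ∀ ⦃i i' : Fin n⦄ (f : i ⟶ i'), k ≤ i.val → C i ≤ (C i').comap (F.map f).hom := by
  obtain ⟨d, hd⟩ : ∃ d, n - k = d := ⟨_, rfl⟩
  induction d generalizing k with
  | zero => exact ⟨fun _ => ⊥, fun i hi => absurd i.isLt (by omega),
      fun i _ _ hi => absurd i.isLt (by omega)⟩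
  | succ d ih =>
    obtain ⟨C, hC, hCinv⟩ := ih (k + 1) (fun i i' f hi => hW f (by omega)) (by omega)
    let p : Fin n := ⟨k, by omega⟩
    obtain ⟨D, hD, hDC⟩ := exists_isCompl_extend_of_le_map F W C p
      (fun i' f => hW f le_rfl) hC hCinv
    refine ⟨Function.update C p D, fun i hi => ?_, fun i i' f hi => ?_⟩
    · rcases hi.lt_or_eq with hi | hi
      · rw [Function.update_of_ne (Fin.ne_of_gt hi)]
        exact hC i hi
      · obtain rfl : i = p := Fin.ext hi.symm
        rw [Function.update_self]
        exact hD
    · have hii' : i ≤ i' := leOfHom f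
      rcases hi.lt_or_eq with hi | hi
      · rw [Function.update_of_ne (Fin.ne_of_gt hi),
          Function.update_of_ne (Fin.ne_of_gt (lt_of_lt_of_le hi hii'))]
        exact hCinv f hi
      · obtain rfl : i = p := Fin.ext hi.symm
        rw [Function.update_self]
        rcases hii'.lt_or_eq with hi' | rfl
        · rw [Function.update_of_ne (Fin.ne_of_gt hi')]
          exact hDC f hi'
        · rw [Function.update_self, Subsingleton.elim f (𝟙 _), F.map_id]
          exact le_rfl

end Chains

section Cut

variable {K : Type u} [DivisionRing K] {n : ℕ} (F : Fin n ⥤ ModuleCat.{v} K) (k : ℕ)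

theorem isInvariantFamily_ite {X Y : ∀ i, Submodule K (F.obj i)}
    (hX : ∀ ⦃i i' : Fin n⦄ (f : i ⟶ i'), i'.val < k → X i ≤ (X i').comap (F.map f).hom)
    (hY : ∀ ⦃i i' : Fin n⦄ (f : i ⟶ i'), k ≤ i.val → Y i ≤ (Y i').comap (F.map f).hom)
    (hXY : ∀ ⦃i i' : Fin n⦄ (f : i ⟶ i'), i.val < k → k ≤ i'.val →
      X i ≤ (Y i').comap (F.map f).hom) :
    IsInvariantFamily F (fun i => if i.val < k then X i else Y i) := by
  intro i i' f
  have hii' : i.val ≤ i'.val := leOfHom f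
  dsimp only
  split_ifs with hi hi' hi'
  exacts [hX f hi', hXY f hi (not_lt.1 hi'), absurd (hii'.trans_lt hi') hi, hY f (not_lt.1 hi)]

theorem isCompl_ite {X X' Y Y' : ∀ i, Submodule K (F.obj i)}
    (hX : ∀ i : Fin n, i.val < k → IsCompl (X i) (X' i))
    (hY : ∀ i : Fin n, k ≤ i.val → IsCompl (Y i) (Y' i)) (i : Fin n) :
    IsCompl (if i.val < k then X i else Y i) (if i.val < k then X' i else Y' i) := by
  split_ifs with hi
  exacts [hX i hi, hY i (not_lt.1 hi)]

theorem isInvariantFamily_ite_bot_top :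
    IsInvariantFamily F (fun i => if i.val < k then ⊥ else ⊤) :=
  isInvariantFamily_ite F k (fun _ _ _ _ => bot_le) (fun _ _ _ _ => le_top)
    (fun _ _ _ _ _ => bot_le)

theorem isInvariantFamily_ite_top_bot
    (hF : ∀ ⦃i i' : Fin n⦄ (f : i ⟶ i'), i.val < k → k ≤ i'.val → F.map f = 0) :
    IsInvariantFamily F (fun i => if i.val < k then ⊤ else ⊥) :=
  isInvariantFamily_ite F k (fun _ _ _ _ => le_top) (fun _ _ _ _ => bot_le)
    fun _ _ f hi hi' => by
      rw [Submodule.comap_bot, hF f hi hi', ModuleCat.hom_zero, LinearMap.ker_zero]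

end Cut

namespace Ladder

variable {K : Type u} [DivisionRing K] {m : ℕ} (M : (Fin m × Fin 2) ⥤ ModuleCat.{v} K)

def row (s : Fin 2) : Fin m ⥤ ModuleCat.{v} K :=
  Monotone.functor (f := fun i => (i, s)) (fun _ _ h => Prod.mk_le_mk.2 ⟨h, le_rfl⟩) ⋙ M

theorem vertical_le (i : Fin m) : ((i, 0) : Fin m × Fin 2) ≤ (i, 1) :=
  Prod.mk_le_mk.2 ⟨le_rfl, Fin.zero_le _⟩

def vertical : row M 0 ⟶ row M 1 where
  app i := M.map (homOfLE (vertical_le i))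
  naturality _ _ _ := by simp only [row, Functor.comp_map, ← M.map_comp]; rfl

def family (P : ∀ i, Submodule K ((row M 0).obj i)) (Q : ∀ i, Submodule K ((row M 1).obj i)) :
    ∀ v, Submodule K (M.obj v)
  | (i, 0) => P i
  | (i, 1) => Q i

variable {M}

theorem isInvariantFamily_family {P : ∀ i, Submodule K ((row M 0).obj i)}
    {Q : ∀ i, Submodule K ((row M 1).obj i)} (hP : IsInvariantFamily (row M 0) P)
    (hQ : IsInvariantFamily (row M 1) Q)
    (hPQ : ∀ i, P i ≤ (Q i).comap ((vertical M).app i).hom) :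
    IsInvariantFamily M (family M P Q) := by
  rintro ⟨i, s⟩ ⟨i', s'⟩ f
  obtain ⟨hii', hss'⟩ := leOfHom f
  fin_cases s <;> fin_cases s'
  · exact hP (homOfLE hii')
  · rw [M.map_eq_map_comp_map (vertical_le i) (Prod.mk_le_mk.2 ⟨hii', le_rfl⟩)]
    exact (hPQ i).trans (Submodule.comap_mono (hQ (homOfLE hii')))
  · exact absurd hss' (by simp)
  · exact hQ (homOfLE hii')

theorem isCompl_family {P P' : ∀ i, Submodule K ((row M 0).obj i)}
    {Q Q' : ∀ i, Submodule K ((row M 1).obj i)} (hP : ∀ i, IsCompl (P i) (P' i))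
    (hQ : ∀ i, IsCompl (Q i) (Q' i)) (v : Fin m × Fin 2) :
    IsCompl (family M P Q v) (family M P' Q' v) := by
  obtain ⟨i, s⟩ := v
  fin_cases s
  exacts [hP i, hQ i]

section BottomCut

variable (M) (c : Fin m)

noncomputable def leftTop (i : Fin m) : Submodule K ((row M 1).obj i) :=
  if h : i ≤ c then
    (LinearMap.range ((vertical M).app c).hom).comap ((row M 1).map (homOfLE h)).hom
  else ⊥

variable {M c}

theorem leftTop_eq_comap ⦃i i' : Fin m⦄ (f : i ⟶ i') (hi' : i' ≤ c) :
    leftTop M c i = (leftTop M c i').comap ((row M 1).map f).hom := by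
  rw [leftTop, leftTop, dif_pos ((leOfHom f).trans hi'), dif_pos hi',
    comap_map_eq_comap_comap (row M 1) _ f (homOfLE hi')]

theorem le_comap_vertical_leftTop (i : Fin m) :
    (if i.val < c.val + 1 then ⊤ else ⊥) ≤ (leftTop M c i).comap ((vertical M).app i).hom := by
  split_ifs with hi
  · have hic : i ≤ c := Fin.le_def.2 (by omega)
    intro u _
    rw [Submodule.mem_comap, leftTop, dif_pos hic, Submodule.mem_comap]
    exact ⟨(row M 0).map (homOfLE hic) u, NatTrans.naturality_apply (vertical M) _ u⟩
  · exact bot_le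

theorem isInvariantFamily_leftTop
    (hc : ∀ ⦃i : Fin m⦄ (f : c ⟶ i), c < i → (row M 0).map f = 0) :
    IsInvariantFamily (row M 1) (leftTop M c) := by
  intro i i' f
  by_cases hi' : i' ≤ c
  · exact (leftTop_eq_comap f hi').le
  by_cases hi : i ≤ c
  · rintro u hu
    rw [leftTop, dif_pos hi] at hu
    obtain ⟨w, hw⟩ := hu
    rw [Submodule.mem_comap, leftTop, dif_neg hi', Submodule.mem_bot,
      (row M 1).map_eq_map_comp_map hi (not_le.1 hi').le, ModuleCat.comp_apply, ← hw,
      ← NatTrans.naturality_apply, hc _ (not_le.1 hi')]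
    simp
  · rw [leftTop, dif_neg hi]
    exact bot_le

theorem isCompl_leftTop {C : ∀ i, Submodule K ((row M 1).obj i)}
    (hC : ∀ i : Fin m, i.val < c.val + 1 → IsCompl (leftTop M c i) (C i)) (i : Fin m) :
    IsCompl (leftTop M c i) (if i.val < c.val + 1 then C i else ⊤) := by
  split_ifs with hi
  · exact hC i hi
  · rw [leftTop, dif_neg (fun h => hi (by omega))]
    exact isCompl_bot_top

theorem decomposable_of_bottom_map_eq_zero
    (hc : ∀ ⦃i : Fin m⦄ (f : c ⟶ i), c < i → (row M 0).map f = 0) {x z : Fin m × Fin 2}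
    (hx0 : x.2 = 0) (hxc : x.1 ≤ c) (hcz : c < z.1) (hx : ¬ IsZero (M.obj x))
    (hz : ¬ IsZero (M.obj z)) : Decomposable M := by
  obtain ⟨C, hC, hCinv⟩ := exists_isCompl_isInvariant_of_comap_le (row M 1) (leftTop M c)
    (c.val + 1) fun i i' f hi' => (leftTop_eq_comap f (Fin.le_def.2 (by omega))).ge
  refine IsInvariantFamily.decomposable
    (A := family M (fun i => if i.val < c.val + 1 then ⊤ else ⊥) (leftTop M c))
    (B := family M (fun i => if i.val < c.val + 1 then ⊥ else ⊤)
      (fun i => if i.val < c.val + 1 then C i else ⊤))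
    (isInvariantFamily_family
      (isInvariantFamily_ite_top_bot _ _ fun i i' f hi hi' =>
        (row M 0).map_eq_zero_of_le_of_lt hc f (Fin.le_def.2 (by omega))
          (Fin.lt_def.2 (by omega)))
      (isInvariantFamily_leftTop hc) le_comap_vertical_leftTop)
    (isInvariantFamily_family (isInvariantFamily_ite_bot_top _ _)
      (isInvariantFamily_ite _ _ hCinv (fun _ _ _ _ => le_top) (fun _ _ _ _ _ => le_top))
      (fun i => by split_ifs <;> simp))
    (isCompl_family (isCompl_ite _ _ (fun _ _ => isCompl_top_bot) (fun _ _ => isCompl_bot_top))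
      (isCompl_leftTop hC)) ?_ ?_ hx hz
  · obtain ⟨x1, x2⟩ := x
    obtain rfl : x2 = 0 := hx0
    exact if_pos (Nat.lt_succ_of_le hxc)
  · obtain ⟨z1, z2⟩ := z
    have hz1 : ¬ z1.val < c.val + 1 := fun h => (not_lt.2 (Nat.le_of_lt_succ h)) hcz
    fin_cases z2
    exacts [if_neg hz1, if_neg hz1]

end BottomCut

section TopCut

variable (M) (j : Fin m)

noncomputable def leftBottom (i : Fin m) : Submodule K ((row M 0).obj i) :=
  if h : j ≤ i then LinearMap.range ((row M 0).map (homOfLE h)).hom else ⊤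

variable {M j}

theorem leftBottom_eq_top {i : Fin m} (hi : i ≤ j) : leftBottom M j i = ⊤ := by
  rw [leftBottom]
  split_ifs with h
  · obtain rfl := le_antisymm hi h
    rw [Subsingleton.elim (homOfLE h) (𝟙 i), (row M 0).map_id]
    exact LinearMap.range_id
  · rfl

theorem leftBottom_eq_map ⦃i i' : Fin m⦄ (f : i ⟶ i') (hi : j ≤ i) :
    leftBottom M j i' = (leftBottom M j i).map ((row M 0).map f).hom := by
  rw [leftBottom, leftBottom, dif_pos hi, dif_pos (hi.trans (leOfHom f)), ← LinearMap.range_comp,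
    ← ModuleCat.hom_comp, ← (row M 0).map_comp]
  rfl

theorem isInvariantFamily_leftBottom : IsInvariantFamily (row M 0) (leftBottom M j) := by
  intro i i' f
  by_cases hi : j ≤ i
  · exact Submodule.map_le_iff_le_comap.1 (leftBottom_eq_map f hi).ge
  by_cases hi' : j ≤ i'
  · intro u _
    rw [Submodule.mem_comap, leftBottom, dif_pos hi',
      (row M 0).map_eq_map_comp_map (not_le.1 hi).le hi', ModuleCat.comp_apply]
    exact LinearMap.mem_range_self _ _
  · intro u _
    rw [Submodule.mem_comap, leftBottom, dif_neg hi']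
    trivial

theorem leftBottom_le_comap_vertical
    (hj : ∀ ⦃i : Fin m⦄ (f : j ⟶ i), j < i → (row M 1).map f = 0) (i : Fin m) :
    leftBottom M j i ≤ (if i.val < j.val + 1 then ⊤ else ⊥ : Submodule K ((row M 1).obj i)).comap
      ((vertical M).app i).hom := by
  split_ifs with hi
  · exact le_top
  · have hji : j < i := Fin.lt_def.2 (by omega)
    rw [leftBottom, dif_pos hji.le]
    rintro _ ⟨w, rfl⟩
    rw [Submodule.mem_comap, Submodule.mem_bot, NatTrans.naturality_apply, hj _ hji]
    rfl

theorem isCompl_leftBottom {C : ∀ i, Submodule K ((row M 0).obj i)}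
    (hC : ∀ i : Fin m, j.val ≤ i.val → IsCompl (leftBottom M j i) (C i)) (i : Fin m) :
    IsCompl (leftBottom M j i) (if i.val < j.val then ⊥ else C i) := by
  split_ifs with hi
  · rw [leftBottom_eq_top (Fin.le_def.2 hi.le)]
    exact isCompl_top_bot
  · exact hC i (not_lt.1 hi)

theorem ite_bot_le_comap_vertical {C : ∀ i, Submodule K ((row M 0).obj i)} (hCj : C j = ⊥)
    (i : Fin m) : (if i.val < j.val then ⊥ else C i) ≤
      (if i.val < j.val + 1 then ⊥ else ⊤ : Submodule K ((row M 1).obj i)).comap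
        ((vertical M).app i).hom := by
  by_cases hi : i.val < j.val
  · rw [if_pos hi]
    exact bot_le
  rw [if_neg hi]
  by_cases hi' : i.val < j.val + 1
  · obtain rfl : i = j := Fin.ext (by omega)
    rw [hCj]
    exact bot_le
  · rw [if_neg hi']
    exact le_top

theorem decomposable_of_top_map_eq_zero
    (hj : ∀ ⦃i : Fin m⦄ (f : j ⟶ i), j < i → (row M 1).map f = 0) {x z : Fin m × Fin 2}
    (hxj : x.1 ≤ j) (hz1 : z.2 = 1) (hjz : j < z.1) (hx : ¬ IsZero (M.obj x))
    (hz : ¬ IsZero (M.obj z)) : Decomposable M := by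
  obtain ⟨C, hC, hCinv⟩ := exists_isCompl_isInvariant_of_le_map (row M 0) (leftBottom M j)
    j.val fun i i' f hi => (leftBottom_eq_map f (Fin.le_def.2 hi)).le
  have hCj : C j = ⊥ := by
    simpa [leftBottom_eq_top le_rfl] using (hC j le_rfl).inf_eq_bot
  refine IsInvariantFamily.decomposable
    (A := family M (leftBottom M j) (fun i => if i.val < j.val + 1 then ⊤ else ⊥))
    (B := family M (fun i => if i.val < j.val then ⊥ else C i)
      (fun i => if i.val < j.val + 1 then ⊥ else ⊤))
    (isInvariantFamily_family isInvariantFamily_leftBottom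
      (isInvariantFamily_ite_top_bot _ _ fun i i' f hi hi' =>
        (row M 1).map_eq_zero_of_le_of_lt hj f (Fin.le_def.2 (by omega))
          (Fin.lt_def.2 (by omega)))
      (leftBottom_le_comap_vertical hj))
    (isInvariantFamily_family
      (isInvariantFamily_ite _ _ (fun _ _ _ _ => bot_le) hCinv (fun _ _ _ _ _ => bot_le))
      (isInvariantFamily_ite_bot_top _ _) (ite_bot_le_comap_vertical hCj))
    (isCompl_family (isCompl_leftBottom hC)
      (isCompl_ite _ _ (fun _ _ => isCompl_top_bot) (fun _ _ => isCompl_bot_top))) ?_ ?_ hx hz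
  · obtain ⟨x1, x2⟩ := x
    fin_cases x2
    exacts [leftBottom_eq_top hxj, if_pos (Nat.lt_succ_of_le hxj)]
  · obtain ⟨z1, z2⟩ := z
    obtain rfl : z2 = 1 := hz1
    exact if_neg (not_lt.2 (Nat.succ_le_of_lt hjz))

end TopCut

end Ladder

theorem ladder_nonconvex_support_decomposable_general (K : Type) [Field K] (m : ℕ)
    (M : (Fin m × Fin 2) ⥤ ModuleCat.{0} K)
    (x y z : Fin m × Fin 2) (hxy : x ≤ y) (hyz : y ≤ z)
    (hx : ¬ IsZero (M.obj x)) (hy : IsZero (M.obj y)) (hz : ¬ IsZero (M.obj z)) :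
    ∃ M₁ M₂ : (Fin m × Fin 2) ⥤ ModuleCat.{0} K,
      ¬ IsZero M₁ ∧ ¬ IsZero M₂ ∧ Nonempty (M ≅ M₁ ⊞ M₂) := by
  have hxy' : x ≠ y := fun h => hx (h ▸ hy)
  have hyz' : y ≠ z := fun h => hz (h ▸ hy)
  obtain ⟨j, s⟩ := y
  fin_cases s
  · have hx0 : x.2 = 0 := le_antisymm hxy.2 (Fin.zero_le _)
    have hxj : x.1.val < j.val := lt_of_le_of_ne hxy.1 fun h => hxy' (Prod.ext (Fin.ext h) hx0)
    have hjz : j.val ≤ z.1.val := hyz.1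
    obtain ⟨c, hcj⟩ : ∃ c : Fin m, c.val + 1 = j.val := ⟨⟨j.val - 1, by omega⟩, by simp; omega⟩
    refine Ladder.decomposable_of_bottom_map_eq_zero (c := c) (fun i f hci => ?_) hx0
      (Fin.le_def.2 (by omega)) (Fin.lt_def.2 (by omega)) hx hz
    have hci : c.val < i.val := hci
    exact M.map_eq_zero_of_isZero hy (Prod.mk_le_mk.2 ⟨Fin.le_def.2 (by omega), le_rfl⟩)
      (Prod.mk_le_mk.2 ⟨Fin.le_def.2 (by omega), le_rfl⟩) _
  · have hz1 : z.2 = 1 := le_antisymm (Fin.le_last _) hyz.2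
    have hjz : j < z.1 := lt_of_le_of_ne hyz.1 fun h => hyz' (Prod.ext h hz1.symm)
    exact Ladder.decomposable_of_top_map_eq_zero (fun i f _ => hy.eq_of_src _ _) hxy.1 hz1 hjz hx hz

/-- Let `M` be a persistence module over the commutative ladder `{1,…,m} × {1,2}`
(with the product order). If there are vertices `x ≤ y ≤ z` with `M(x) ≠ 0`, `M(y) = 0`
and `M(z) ≠ 0`, then `M` is decomposable: `M ≅ M₁ ⊞ M₂` with both `M₁`, `M₂` nonzero. -/
theorem ladder_nonconvex_support_decomposable (K : Type) [Field K] (m : ℕ)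
    (M : (Fin m × Fin 2) ⥤ ModuleCat.{0} K)
    (hfd : ∀ v : Fin m × Fin 2, FiniteDimensional K (M.obj v))
    (x y z : Fin m × Fin 2) (hxy : x ≤ y) (hyz : y ≤ z)
    (hx : ¬ IsZero (M.obj x)) (hy : IsZero (M.obj y)) (hz : ¬ IsZero (M.obj z)) :
    ∃ M₁ M₂ : (Fin m × Fin 2) ⥤ ModuleCat.{0} K,
      ¬ IsZero M₁ ∧ ¬ IsZero M₂ ∧ Nonempty (M ≅ M₁ ⊞ M₂) :=
  ladder_nonconvex_support_decomposable_general K m M x y z hxy hyz hx hy hz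
end

section
/- Let Ŝ be a representation of the A₃ quiver in persistence modules of the form I → V'' → V, and let Ŝ' be its extension by a surjection p : V ↠ W appended at the end. If End(Ŝ) is local and W has finite total dimension, then End(Ŝ') is local. In particular, if φ ∈ End(Ŝ') restricts to an invertible endomorphism on Ŝ, then φ|_W is an isomorphism. -/
/-!
Restriction to `I → V'' → V` is a ring homomorphism `End Ŝ' → End Ŝ`, and `End Ŝ'` is local as
soon as this homomorphism reflects units. So let `φ` restrict to a unit; then `φ` is invertible
on `V`, and naturality `p ≫ φ_W = φ_V ≫ p` with `p` surjective makes `φ_W` surjective. A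
surjective endomorphism of a finite-dimensional space is bijective, so `φ_W`, and with it `φ`,
is invertible.
-/

open CategoryTheory CategoryTheory.Limits

attribute [local instance 2000] Preorder.smallCategory

/-- The inclusion of the first three vertices of `A₄` (as `Fin 3 ⥤ Fin 4`). -/
def incl3 : Fin 3 ⥤ Fin 4 :=
  Monotone.functor (f := (Fin.castSucc : Fin 3 → Fin 4))
    (fun _ _ h => Fin.castSucc_le_castSucc_iff.mpr h)

def CategoryTheory.Functor.whiskerLeftEndRingHom {C D E : Type*} [Category C] [Category D]
    [Category E] [Preadditive E] (F : C ⥤ D) (G : D ⥤ E) : End G →+* End (F ⋙ G) where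
  toFun := Functor.whiskerLeft F
  map_one' := rfl
  map_mul' _ _ := rfl
  map_zero' := rfl
  map_add' _ _ := rfl

theorem isIso_of_isIso_whiskerLeft_incl3 {D : Type*} [Category D] {F G : Fin 4 ⥤ D} (φ : F ⟶ G)
    [IsIso (Functor.whiskerLeft incl3 φ)] [IsIso (φ.app 3)] : IsIso φ := by
  have (i : Fin 4) : IsIso (φ.app i) := by
    induction i using Fin.lastCases with
    | last => assumption
    | cast j => exact inferInstanceAs (IsIso ((Functor.whiskerLeft incl3 φ).app j))
  exact NatIso.isIso_of_isIso_app φ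

section

variable {K : Type*} [Field K] {C : Type*} [Category C]

theorem ModuleCat.isIso_of_surjective {M : ModuleCat K} [FiniteDimensional K M] (f : M ⟶ M)
    (hf : Function.Surjective f) : IsIso f :=
  (ConcreteCategory.isIso_iff_bijective f).mpr
    ⟨(LinearMap.injective_iff_surjective (f := f.hom)).mpr hf, hf⟩

theorem surjective_app_of_comp_eq {F G : C ⥤ ModuleCat K} (p : F ⟶ G) (ψ : F ⟶ F) (χ : G ⟶ G)
    (hcomm : p ≫ χ = ψ ≫ p) (hp : ∀ x, Function.Surjective (p.app x)) [IsIso ψ] (x : C) :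
    Function.Surjective (χ.app x) := by
  have hψ : Function.Surjective (ψ.app x) :=
    ((ConcreteCategory.isIso_iff_bijective _).mp inferInstance).2
  have hcomm_x : χ.app x ∘ p.app x = p.app x ∘ ψ.app x := by
    ext v
    exact ConcreteCategory.congr_hom (NatTrans.congr_app hcomm x) v
  exact Function.Surjective.of_comp (hcomm_x ▸ (hp x).comp hψ)

theorem isIso_of_comp_eq {F G : C ⥤ ModuleCat K} [∀ x, FiniteDimensional K (G.obj x)]
    (p : F ⟶ G) (ψ : F ⟶ F) (χ : G ⟶ G) (hcomm : p ≫ χ = ψ ≫ p)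
    (hp : ∀ x, Function.Surjective (p.app x)) [IsIso ψ] : IsIso χ :=
  have (x : C) : IsIso (χ.app x) :=
    ModuleCat.isIso_of_surjective _ (surjective_app_of_comp_eq p ψ χ hcomm hp x)
  NatIso.isIso_of_isIso_app χ

end

/-- Let `Ŝ' : I → V'' → V → W` be a representation of the `A₄` quiver (modelled as the
poset `Fin 4`) in persistence modules over `ℤⁿ`, whose last map `p : V ⟶ W` is a
pointwise surjection, with `W` of finite total dimension (pointwise finite dimensional
with finite support).  Let `Ŝ = incl3 ⋙ Ŝ'` be the restriction of `Ŝ'` to the first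
three vertices (the `A₃` part `I → V'' → V`).  If `End(Ŝ)` is local then `End(Ŝ')` is
local; in particular every endomorphism of `Ŝ'` restricting to an invertible
endomorphism of `Ŝ` has invertible component on `W`. -/
theorem end_local_of_appended_surjection
    (K : Type) [Field K] (n : ℕ)
    (S' : Fin 4 ⥤ ((Fin n → ℤ) ⥤ ModuleCat.{0} K))
    -- the last structure map `p : V ↠ W` is pointwise surjective:
    (hp : ∀ x : Fin n → ℤ,
      Function.Surjective ((S'.map (homOfLE (by decide : (2 : Fin 4) ≤ 3))).app x))
    -- `W = S'.obj 3` has finite total dimension: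
    (hWfd : ∀ x : Fin n → ℤ, FiniteDimensional K ((S'.obj 3).obj x))
    (hS : IsLocalRing (End (incl3 ⋙ S'))) :
    IsLocalRing (End S') ∧
    ∀ φ : End S',
      IsUnit (show End (incl3 ⋙ S') from Functor.whiskerLeft incl3 φ) → IsIso (φ.app 3) := by
  have key (φ : End S') (hφ : IsUnit (show End (incl3 ⋙ S') from Functor.whiskerLeft incl3 φ)) :
      IsIso (φ.app 3) := by
    have := (isUnit_iff_isIso _).mp hφ
    have : IsIso (φ.app 2) := inferInstanceAs (IsIso ((Functor.whiskerLeft incl3 φ).app 2))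
    exact isIso_of_comp_eq _ (φ.app 2) (φ.app 3) (φ.naturality _) hp
  have : IsLocalHom (Functor.whiskerLeftEndRingHom incl3 S') := ⟨fun φ hφ => by
    have := key φ hφ
    have := (isUnit_iff_isIso (Functor.whiskerLeft incl3 φ : End (incl3 ⋙ S'))).mp hφ
    exact (isUnit_iff_isIso φ).mpr (isIso_of_isIso_whiskerLeft_incl3 φ)⟩
  exact ⟨(Functor.whiskerLeftEndRingHom incl3 S').domain_isLocalRing, key⟩
end

section
/- Let M be a persistence module over ℤ^{n+1} obtained by concatenating (as described) a countable sequence of finite candy modules, where each finite truncation between consecutive connecting vertices is indecomposable. If M = M₁ ⊕ M₂ with M₁, M₂ nonzero, then there exists a finite convex subgrid G of ℤ^{n+1} such that M|_G = M₁|_G ⊕ M₂|_G is a nontrivial decomposition of an indecomposable module — a contradiction. Hence M is indecomposable. -/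
/-!
A nontrivial splitting `M ≅ M₁ ⊞ M₂` has a point of nonzero support in each summand. Both points
lie in a single member `F k` of the increasing exhausting family, and restricting the splitting
to `F k` decomposes the indecomposable module `M|_{F k}` into two nonzero summands.
-/

open CategoryTheory CategoryTheory.Limits

attribute [local instance] HasFiniteBiproducts.of_hasFiniteProducts
attribute [local instance 2000] Preorder.smallCategory

/-- Restriction of a persistence module over `ℤ^{n+1}` to a subgrid `G`. -/
noncomputable def restrictTo {K : Type} [Field K] {n : ℕ} (M : (Fin (n + 1) → ℤ) ⥤ ModuleCat.{0} K)
    (G : Set (Fin (n + 1) → ℤ)) : G ⥤ ModuleCat.{0} K :=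
  (Monotone.functor (f := (Subtype.val : G → (Fin (n + 1) → ℤ)))
    (fun _ _ h => h)) ⋙ M

attribute [local instance] preservesBinaryBiproducts_of_preservesBiproducts

lemma Functor.isZero_obj_of_isZero_biprod_obj {C D : Type*} [Category C] [Category D]
    [Preadditive D] [HasBinaryBiproducts D] {M₁ M₂ : C ⥤ D} {x : C}
    (h : IsZero ((M₁ ⊞ M₂).obj x)) : IsZero (M₁.obj x) ∧ IsZero (M₂.obj x) :=
  (biprod_isZero_iff _ _).1 ((((evaluation C D).obj x).mapBiprod M₁ M₂).isZero_iff.1 h)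

section Restriction

variable {K : Type} [Field K] {n : ℕ}

noncomputable def restrictToBiprodIso (M₁ M₂ : (Fin (n + 1) → ℤ) ⥤ ModuleCat.{0} K)
    (G : Set (Fin (n + 1) → ℤ)) :
    restrictTo (M₁ ⊞ M₂) G ≅ restrictTo M₁ G ⊞ restrictTo M₂ G :=
  ((Functor.whiskeringLeft _ _ _).obj _).mapBiprod M₁ M₂

lemma not_isZero_restrictTo_of_mem {M : (Fin (n + 1) → ℤ) ⥤ ModuleCat.{0} K}
    {G : Set (Fin (n + 1) → ℤ)} {x : Fin (n + 1) → ℤ} (hxG : x ∈ G) (hx : ¬IsZero (M.obj x)) :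
    ¬IsZero (restrictTo M G) :=
  fun h => hx ((Functor.isZero_iff _).1 h ⟨x, hxG⟩)

end Restriction

theorem concatenation_indecomposable_general
    (K : Type) [Field K] (n : ℕ)
    (M : (Fin (n + 1) → ℤ) ⥤ ModuleCat.{0} K)
    (F : ℕ → Set (Fin (n + 1) → ℤ))
    (hmono : ∀ k, F k ⊆ F (k + 1))
    (hexh : ∀ x : Fin (n + 1) → ℤ, ¬ IsZero (M.obj x) → ∃ k, x ∈ F k)
    -- each finite truncation is indecomposable:
    (hindec : ∀ k, ∀ A B : (F k : Set (Fin (n + 1) → ℤ)) ⥤ ModuleCat.{0} K,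
      Nonempty (restrictTo M (F k) ≅ A ⊞ B) → IsZero A ∨ IsZero B) :
    ∀ M₁ M₂ : (Fin (n + 1) → ℤ) ⥤ ModuleCat.{0} K,
      Nonempty (M ≅ M₁ ⊞ M₂) → IsZero M₁ ∨ IsZero M₂ := by
  intro M₁ M₂ ⟨e⟩
  by_contra! h
  obtain ⟨⟨x₁, hx₁⟩, ⟨x₂, hx₂⟩⟩ :
      (∃ x, ¬IsZero (M₁.obj x)) ∧ ∃ x, ¬IsZero (M₂.obj x) := by
    simpa only [Functor.isZero_iff, not_forall] using h
  have hM (x) (hx : IsZero (M.obj x)) : IsZero (M₁.obj x) ∧ IsZero (M₂.obj x) :=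
    Functor.isZero_obj_of_isZero_biprod_obj ((e.app x).isZero_iff.1 hx)
  obtain ⟨k₁, hk₁⟩ := hexh x₁ fun hx => hx₁ (hM x₁ hx).1
  obtain ⟨k₂, hk₂⟩ := hexh x₂ fun hx => hx₂ (hM x₂ hx).2
  have hF : Monotone F := monotone_nat_of_le_succ hmono
  rcases hindec (max k₁ k₂) _ _
      ⟨Functor.isoWhiskerLeft _ e ≪≫ restrictToBiprodIso M₁ M₂ _⟩ with h₁ | h₂
  · exact not_isZero_restrictTo_of_mem (hF (le_max_left k₁ k₂) hk₁) hx₁ h₁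
  · exact not_isZero_restrictTo_of_mem (hF (le_max_right k₁ k₂) hk₂) hx₂ h₂

/-- Abstract indecomposability of an infinite concatenation of candy modules.
Let `M` be a pointwise finite dimensional persistence module over `ℤ^{n+1}` and let
`F : ℕ → Set ℤ^{n+1}` be an exhausting increasing family of finite convex subgrids
(every point of the support lies in some `F k`) such that every restriction `M|_{F k}`
is indecomposable.  If `M ≅ M₁ ⊞ M₂` then `M₁` or `M₂` is zero; hence `M` is
indecomposable. -/
theorem concatenation_indecomposable
    (K : Type) [Field K] (n : ℕ)
    (M : (Fin (n + 1) → ℤ) ⥤ ModuleCat.{0} K)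
    (hfd : ∀ x : Fin (n + 1) → ℤ, FiniteDimensional K (M.obj x))
    (F : ℕ → Set (Fin (n + 1) → ℤ))
    (hfin : ∀ k, (F k).Finite)
    (hconv : ∀ k, ∀ x ∈ F k, ∀ z ∈ F k, ∀ y, x ≤ y → y ≤ z → y ∈ F k)
    (hmono : ∀ k, F k ⊆ F (k + 1))
    (hexh : ∀ x : Fin (n + 1) → ℤ, ¬ IsZero (M.obj x) → ∃ k, x ∈ F k)
    -- each finite truncation is indecomposable:
    (hindec : ∀ k, ∀ A B : (F k : Set (Fin (n + 1) → ℤ)) ⥤ ModuleCat.{0} K,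
      Nonempty (restrictTo M (F k) ≅ A ⊞ B) → IsZero A ∨ IsZero B) :
    ∀ M₁ M₂ : (Fin (n + 1) → ℤ) ⥤ ModuleCat.{0} K,
      Nonempty (M ≅ M₁ ⊞ M₂) → IsZero M₁ ∨ IsZero M₂ :=
  concatenation_indecomposable_general K n M F hmono hexh hindec
end
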